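/- Let F be a lattice filter and P an implication filter of an MV-algebra L. If H is any lattice filter with F ⊆ H and P ⊆ K(H), then J_u(F, P) ⊆ H; that is, J_u(F, P) is the smallest lattice filter containing F whose kernel contains P. -/

import Mathlib

/-- An MV-algebra: a commutative monoid `(L, ⊕, 0)` with a unary `¬` satisfying
`¬¬x = x`, `x ⊕ ¬0 = ¬0` and `¬(¬x ⊕ y) ⊕ y = ¬(¬y ⊕ x) ⊕ x`. -/
class MV (L : Type*) where
  add : L → L → L
  zero : L
  neg : L → L
  add_assoc : ∀ x y z : L, add (add x y) z = add x (add y z)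
  add_comm : ∀ x y : L, add x y = add y x
  add_zero : ∀ x : L, add x zero = x
  neg_neg : ∀ x : L, neg (neg x) = x
  add_neg_zero : ∀ x : L, add x (neg zero) = neg zero
  luk : ∀ x y : L, add (neg (add (neg x) y)) y = add (neg (add (neg y) x)) x

namespace MV

variable {L : Type*} [MV L]

/-- `1 = ¬0`. -/
def one : L := neg zero

/-- `x → y = ¬x ⊕ y`. -/
def imp (x y : L) : L := add (neg x) y

/-- `x ⊗ y = ¬(¬x ⊕ ¬y)`. -/
def otimes (x y : L) : L := neg (add (neg x) (neg y))

/-- `x ∨ y = (x → y) → y`. -/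
def join (x y : L) : L := imp (imp x y) y

/-- `x ∧ y = ¬(¬x ∨ ¬y)`. -/
def meet (x y : L) : L := neg (join (neg x) (neg y))

/-- `x ≤ y` iff `x → y = 1`. -/
def le (x y : L) : Prop := imp x y = one

/-- `x < y` iff `x ≤ y` and `x ≠ y`. -/
def lt (x y : L) : Prop := le x y ∧ x ≠ y

/-- A lattice filter: nonempty, upward closed, closed under `∧`. -/
def IsLatticeFilter (F : Set L) : Prop :=
  F.Nonempty ∧ (∀ x y : L, x ∈ F → le x y → y ∈ F) ∧
    (∀ x y : L, x ∈ F → y ∈ F → meet x y ∈ F)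

/-- A prime lattice filter: a proper lattice filter such that
`x ∨ y ∈ F` implies `x ∈ F` or `y ∈ F`. -/
def IsPrimeFilter (F : Set L) : Prop :=
  IsLatticeFilter F ∧ F ≠ Set.univ ∧ ∀ x y : L, join x y ∈ F → x ∈ F ∨ y ∈ F

/-- `F ⊸ G = {z | ∀ a ∉ G, z → a ∉ F}` (intended for `F ⊆ G`). -/
def lolli (F G : Set L) : Set L := {z | ∀ a ∉ G, imp z a ∉ F}

/-- The general `F ⊸ G = (F ∩ G) ⊸ G`. -/
def lolli' (F G : Set L) : Set L := lolli (F ∩ G) G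

/-- The kernel `K(F) = {z | ∀ a ∉ F, z → a ∉ F}`. -/
def ker (F : Set L) : Set L := {z | ∀ a ∉ F, imp z a ∉ F}

/-- `F⁺ = {z | ¬z ∉ F}`. -/
def plus (F : Set L) : Set L := {z | neg z ∉ F}

/-- An implication filter: contains `1` and is closed under modus ponens. -/
def IsImplicationFilter (P : Set L) : Prop :=
  (one : L) ∈ P ∧ ∀ x y : L, x ∈ P → imp x y ∈ P → y ∈ P

/-- `x ~_P y` iff `x → y ∈ P` and `y → x ∈ P`. -/
def simP (P : Set L) (x y : L) : Prop := imp x y ∈ P ∧ imp y x ∈ P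

/-- `J_u(F, P) = {z | ∃ f ∈ F, z ~_P f}`. -/
def Ju (F P : Set L) : Set L := {z | ∃ f ∈ F, simP P z f}

/-- `J_d(F, P) = (J_u(F⁺, P))⁺`. -/
def Jd (F P : Set L) : Set L := plus (Ju (plus F) P)

end MV

/-! If `z ~_P f` with `f ∈ F ⊆ H`, then `f → z ∈ P ⊆ K(H)`. Were `z ∉ H`, the kernel condition would
give `(f → z) → z = f ∨ z ∉ H`, contradicting `f ≤ f ∨ z` and upward closure of `H`. -/

namespace MV

variable {L : Type*} [MV L]

theorem neg_one : neg (one : L) = zero := neg_neg zero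

theorem zero_add (x : L) : add zero x = x := by
  rw [MV.add_comm, MV.add_zero]

theorem neg_add_self (x : L) : add (neg x) x = one := by
  have h := luk x (one : L)
  rwa [show add (neg (add (neg x) one)) one = one from add_neg_zero _, neg_one, zero_add,
    eq_comm] at h

theorem le_join_left (x y : L) : le x (join x y) := by
  show add (neg x) (add (neg (add (neg x) y)) y) = one
  rw [← MV.add_assoc, MV.add_comm (neg x), MV.add_assoc]
  exact neg_add_self _

theorem IsLatticeFilter.mem_of_le {H : Set L} (hH : IsLatticeFilter H) {x y : L}
    (hx : x ∈ H) (hxy : le x y) : y ∈ H :=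
  hH.2.1 x y hx hxy

theorem join_not_mem_of_imp_mem_ker {H : Set L} {x y : L} (hxy : imp x y ∈ ker H)
    (hy : y ∉ H) : join x y ∉ H :=
  hxy y hy

end MV

open MV

theorem stmt_10_general {L : Type*} [MV L] (F P H : Set L)
    (hH : IsLatticeFilter H) (hFH : F ⊆ H) (hPK : P ⊆ ker H) :
    Ju F P ⊆ H := by
  rintro z ⟨f, hfF, -, hfz⟩
  by_contra hzH
  exact join_not_mem_of_imp_mem_ker (hPK hfz) hzH
    (hH.mem_of_le (hFH hfF) (le_join_left f z))

/-- If `F` is a lattice filter, `P` an implication filter, and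
`H` is any lattice filter with `F ⊆ H` and `P ⊆ K(H)`, then `J_u(F, P) ⊆ H`. -/
theorem stmt_10 {L : Type*} [MV L] (F P H : Set L)
    (hF : IsLatticeFilter F) (hP : IsImplicationFilter P)
    (hH : IsLatticeFilter H) (hFH : F ⊆ H) (hPK : P ⊆ ker H) :
    Ju F P ⊆ H :=
  stmt_10_general F P H hH hFH hPK
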